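/- Let C be an N×N column-stochastic matrix with nonnegative entries and let 𝒞 = C ⊗ I_L. Then the block-maximum-norm of 𝒞ᵀ is at most 1, where the block-maximum-norm of a vector x = col{x_1,...,x_N} with blocks x_k ∈ R^L is max_k ‖x_k‖₂ and the matrix norm is the induced norm. -/
import Mathlib


/-- For a column-stochastic `C` with nonnegative entries, the block-maximum-norm of
`𝒞ᵀ = Cᵀ ⊗ I_L` is at most 1: for every block vector `x`, the block-maximum norm of
`𝒞ᵀ x` (whose `k`-th block is `Σ_m C_{m,k} x_m`) is at most that of `x`. -/
theorem stmt6 {N L : ℕ} (C : Matrix (Fin N) (Fin N) ℝ)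
    (hC0 : ∀ m k, 0 ≤ C m k) (hC1 : ∀ k, ∑ m, C m k = 1)
    (hne : (Finset.univ : Finset (Fin N)).Nonempty)
    (x : Fin N → EuclideanSpace ℝ (Fin L)) :
    Finset.univ.sup' hne (fun k => ‖∑ m, C m k • x m‖) ≤
      Finset.univ.sup' hne (fun k => ‖x k‖) := by
  apply Finset.sup'_le
  intro k _
  set M := Finset.univ.sup' hne (fun k => ‖x k‖) with hM
  calc ‖∑ m, C m k • x m‖ ≤ ∑ m, ‖C m k • x m‖ := norm_sum_le _ _
    _ = ∑ m, C m k * ‖x m‖ := by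
        refine Finset.sum_congr rfl fun m _ => ?_
        rw [norm_smul, Real.norm_eq_abs, abs_of_nonneg (hC0 m k)]
    _ ≤ ∑ m, C m k * M := by
        refine Finset.sum_le_sum fun m _ => ?_
        exact mul_le_mul_of_nonneg_left (Finset.le_sup' (fun k => ‖x k‖) (Finset.mem_univ m)) (hC0 m k)
    _ = M := by rw [← Finset.sum_mul, hC1, one_mul]
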